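/- Let σ(x) = 1/(1+exp(−x)) be the logistic function and for real numbers a, b set p_a = σ(a), p_b = σ(b). Then the second Kullback–Leibler moment of Bernoulli(p_a) against Bernoulli(p_b) satisfies: p_a·(log(p_a/p_b))² + (1−p_a)·(log((1−p_a)/(1−p_b)))² ≤ [ p_a/(min(p_a,p_b))² + (1−p_a)/(1−max(p_a,p_b))² ] · (max(p_a,p_b))² · (a − b)². -/

import Mathlib

/-!
Both log-likelihood ratios are increments of functions of the logit: `log σ` has derivative
`1 - σ ∈ (0, 1)` and `log (1 - σ)` has derivative `-σ`, whose size on the segment between `a`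
and `b` is at most `max (σ a) (σ b)` by monotonicity of `σ`. The mean value inequality bounds the
two squared log-ratios by `(a - b)²` and `max (σ a) (σ b)² (a - b)²`, and the stated right-hand
side is coarser still, since `min ≤ max` and `1 - max ≤ 1`.
-/

/-- The logistic (sigmoid) function `σ(x) = 1/(1+exp(−x))`. -/
noncomputable def logistic (x : ℝ) : ℝ := 1 / (1 + Real.exp (-x))

open Real Set

lemma logistic_eq_sigmoid : logistic = sigmoid := by
  funext x
  rw [logistic, sigmoid_def, one_div]

lemma abs_sub_le_mul_abs_sub_of_hasDerivAt {f f' : ℝ → ℝ} {C a b : ℝ}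
    (hf : ∀ x, HasDerivAt f (f' x) x) (hC : ∀ x ∈ uIcc a b, |f' x| ≤ C) :
    |f a - f b| ≤ C * |a - b| := by
  simpa only [Real.norm_eq_abs] using
    (convex_uIcc b a).norm_image_sub_le_of_norm_hasDerivWithin_le
      (fun x _ => (hf x).hasDerivWithinAt) (fun x hx => hC x (uIcc_comm b a ▸ hx))
      left_mem_uIcc right_mem_uIcc

lemma hasDerivAt_log_sigmoid (x : ℝ) :
    HasDerivAt (fun t => log (sigmoid t)) (1 - sigmoid x) x := by
  convert (hasDerivAt_sigmoid x).log (sigmoid_pos x).ne' using 1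
  field_simp [(sigmoid_pos x).ne']

lemma hasDerivAt_log_one_sub_sigmoid (x : ℝ) :
    HasDerivAt (fun t => log (1 - sigmoid t)) (-sigmoid x) x := by
  have h := (hasDerivAt_log_sigmoid (-x)).comp x (hasDerivAt_neg x)
  rw [sigmoid_neg, sub_sub_cancel, mul_neg_one] at h
  simpa only [Function.comp_def, sigmoid_neg] using h

lemma abs_log_sigmoid_sub_le (a b : ℝ) :
    |log (sigmoid a) - log (sigmoid b)| ≤ |a - b| := by
  simpa only [one_mul] using abs_sub_le_mul_abs_sub_of_hasDerivAt (C := 1)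
    hasDerivAt_log_sigmoid fun x _ => by
      rw [abs_of_pos (sub_pos.2 (sigmoid_lt_one x))]
      linarith [sigmoid_pos x]

lemma abs_log_one_sub_sigmoid_sub_le (a b : ℝ) :
    |log (1 - sigmoid a) - log (1 - sigmoid b)| ≤ max (sigmoid a) (sigmoid b) * |a - b| :=
  abs_sub_le_mul_abs_sub_of_hasDerivAt hasDerivAt_log_one_sub_sigmoid fun x hx => by
    rw [abs_neg, abs_of_pos (sigmoid_pos x)]
    exact (sigmoid_monotone.image_uIcc_subset (mem_image_of_mem _ hx)).2

/-- Upper bound on the second KL moment between Bernoulli(σ(a)) and Bernoulli(σ(b)). -/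
theorem second_kl_moment_bernoulli_logistic_le (a b : ℝ) :
    logistic a * (Real.log (logistic a / logistic b)) ^ 2
      + (1 - logistic a) * (Real.log ((1 - logistic a) / (1 - logistic b))) ^ 2
    ≤ (logistic a / (min (logistic a) (logistic b)) ^ 2
        + (1 - logistic a) / (1 - max (logistic a) (logistic b)) ^ 2)
      * (max (logistic a) (logistic b)) ^ 2 * (a - b) ^ 2 := by
  rw [logistic_eq_sigmoid]
  set p := sigmoid a
  set M := max p (sigmoid b)
  set m := min p (sigmoid b)
  have hp : 0 < p := sigmoid_pos a
  have hp' : 0 < 1 - p := sub_pos.2 (sigmoid_lt_one a)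
  have hm : 0 < m := lt_min hp (sigmoid_pos b)
  have hM1 : 0 < 1 - M := sub_pos.2 (max_lt (sigmoid_lt_one a) (sigmoid_lt_one b))
  rw [log_div hp.ne' (sigmoid_pos b).ne', log_div hp'.ne' (sub_pos.2 (sigmoid_lt_one b)).ne']
  have hlog : (log p - log (sigmoid b)) ^ 2 ≤ (a - b) ^ 2 := by
    simpa only [sq_abs] using pow_le_pow_left₀ (abs_nonneg _) (abs_log_sigmoid_sub_le a b) 2
  have hlog_one_sub : (log (1 - p) - log (1 - sigmoid b)) ^ 2 ≤ M ^ 2 * (a - b) ^ 2 := by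
    simpa only [sq_abs, mul_pow] using
      pow_le_pow_left₀ (abs_nonneg _) (abs_log_one_sub_sigmoid_sub_le a b) 2
  have hmin : p ≤ p / m ^ 2 * M ^ 2 := by
    rw [div_mul_eq_mul_div, le_div_iff₀ (by positivity)]
    gcongr
    exact min_le_max
  have hmax : 1 - p ≤ (1 - p) / (1 - M) ^ 2 :=
    le_div_self hp'.le (by positivity) (pow_le_one₀ hM1.le (by linarith [hm.trans_le min_le_max]))
  calc _ ≤ p * (a - b) ^ 2 + (1 - p) * (M ^ 2 * (a - b) ^ 2) :=
        add_le_add (mul_le_mul_of_nonneg_left hlog hp.le) (mul_le_mul_of_nonneg_left hlog_one_sub hp'.le)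
    _ ≤ p / m ^ 2 * M ^ 2 * (a - b) ^ 2 + (1 - p) / (1 - M) ^ 2 * (M ^ 2 * (a - b) ^ 2) := by
        gcongr
    _ = _ := by ring
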